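/- arXiv:1903.09805 — 8 statements merged into one kernel-verified Lean document; each statement's English description precedes it below -/
import Mathlib

section
/- With probability 1, limsup_{n→∞} S_n/√n = +∞ for the simple symmetric random walk (S_n). -/
/-!
By the central limit theorem `liminf P(Sₙ/√n > M) ≥ P(N(0,1) > M) > 0`, so by the reverse Fatou
lemma the event `Sₙ/√n > M` happens infinitely often with positive probability, and then
`limsup Sₙ/√n ≥ M` with positive probability. Changing finitely many steps moves `Sₙ/√n` by
`O(1/√n)`, which does not affect the `limsup`, so this is a tail event and Kolmogorov's zero-one
law makes its probability `1`. Intersecting over `M ∈ ℕ` gives `limsup Sₙ/√n = +∞` almost surely.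
-/

open MeasureTheory ProbabilityTheory Filter

open scoped Topology ENNReal

lemma EReal.limsup_add_of_tendsto_zero {ι : Type*} {l : Filter ι} [l.NeBot] (u : ι → EReal)
    {v : ι → EReal} (hv : Tendsto v l (𝓝 0)) : limsup (u + v) l = limsup u l := by
  have hv' : limsup v l ≠ ⊤ ∧ limsup v l ≠ ⊥ := by simp [hv.limsup_eq]
  apply le_antisymm
  · simpa [hv.limsup_eq] using limsup_add_le (.inr hv'.1) (.inr hv'.2)
  · simpa [hv.liminf_eq] using le_limsup_add (u := u) (v := v) (f := l)

theorem MeasureTheory.limsup_measure_le_measure_limsup {α : Type*} [MeasurableSpace α]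
    (μ : Measure α) [IsFiniteMeasure μ] {s : ℕ → Set α} (hs : ∀ n, MeasurableSet (s n)) :
    limsup (fun n => μ (s n)) atTop ≤ μ (limsup s atTop) := by
  rw [limsup_eq_iInf_iSup_of_nat, limsup_eq_iInf_iSup_of_nat, Set.iInf_eq_iInter,
    Antitone.measure_iInter]
  · exact iInf_mono fun k => iSup₂_le fun n hn => measure_mono (le_iSup₂_of_le n hn le_rfl)
  · exact fun i j hij => iSup₂_mono' fun n hn => ⟨n, hij.trans hn, le_rfl⟩
  · exact fun k => (MeasurableSet.biUnion (Set.to_countable _) fun n _ => hs n).nullMeasurableSet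
  · exact ⟨0, measure_ne_top _ _⟩

lemma MeasureTheory.Measure.map_eq_smul_dirac_add_smul_dirac {α β : Type*} [MeasurableSpace α]
    [MeasurableSpace β] [MeasurableSingletonClass β] {μ : Measure α} {f : α → β}
    (hf : Measurable f) {a b : β} (hab : a ≠ b) (hfab : ∀ x, f x = a ∨ f x = b) :
    μ.map f = μ (f ⁻¹' {a}) • Measure.dirac a + μ (f ⁻¹' {b}) • Measure.dirac b := by
  ext s hs
  have hsplit : f ⁻¹' s = f ⁻¹' ({a} ∩ s) ∪ f ⁻¹' ({b} ∩ s) := by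
    ext x; rcases hfab x with h | h <;> simp [h, hab, hab.symm]
  have hdisj : Disjoint (f ⁻¹' ({a} ∩ s)) (f ⁻¹' ({b} ∩ s)) :=
    (((Set.disjoint_singleton.2 hab).inter_left s).inter_right s).preimage f
  rw [Measure.map_apply hf hs, hsplit,
    measure_union hdisj (hf ((measurableSet_singleton b).inter hs))]
  by_cases ha : a ∈ s <;> by_cases hb : b ∈ s <;>
    simp [ha, hb, Measure.dirac_apply' _ hs, Set.singleton_inter_of_mem,
      Set.singleton_inter_of_notMem]

lemma integral_two_mul_sub_one_eq_zero {Ω : Type*} [MeasurableSpace Ω] {μ : Measure Ω}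
    {b : Ω → ℝ} (hb : Measurable b)
    (hlaw : μ.map b = (2⁻¹ : ℝ≥0∞) • Measure.dirac 0 + (2⁻¹ : ℝ≥0∞) • Measure.dirac 1) :
    ∫ ω, 2 * b ω - 1 ∂μ = 0 := by
  rw [← integral_map (f := fun x : ℝ => 2 * x - 1) hb.aemeasurable (by fun_prop), hlaw,
    integral_add_measure, integral_smul_measure, integral_smul_measure, integral_dirac,
    integral_dirac]
  · norm_num
  all_goals exact (integrable_dirac (by simp)).smul_measure (by simp)

lemma measurable_limsup_inv_sqrt_mul_sum {Ω : Type*} {X : ℕ → Ω → ℝ} :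
    Measurable[limsup (fun i => MeasurableSpace.comap (X i) inferInstance) atTop]
      (fun ω => limsup (fun n : ℕ => (((√n)⁻¹ * ∑ k ∈ Finset.range n, X k ω : ℝ) : EReal))
        atTop) := by
  rw [limsup_eq_iInf_iSup_of_nat, measurable_iff_comap_le, le_iInf_iff]
  intro j
  rw [← measurable_iff_comap_le]
  have hinv : Tendsto (fun n : ℕ => (√n)⁻¹) atTop (𝓝 0) :=
    tendsto_inv_atTop_zero.comp (Real.tendsto_sqrt_atTop.comp tendsto_natCast_atTop_atTop)
  have hshift (ω) :
      limsup (fun n : ℕ => (((√n)⁻¹ * ∑ k ∈ Finset.range n, X k ω : ℝ) : EReal)) atTop =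
        limsup (fun n : ℕ => (((√n)⁻¹ * ∑ k ∈ Finset.Ico j n, X k ω : ℝ) : EReal)) atTop := by
    have hhead : Tendsto (fun n : ℕ => (((√n)⁻¹ * ∑ k ∈ Finset.range j, X k ω : ℝ) : EReal))
        atTop (𝓝 0) := by
      simpa using EReal.tendsto_coe.2 (hinv.mul_const (∑ k ∈ Finset.range j, X k ω))
    rw [← EReal.limsup_add_of_tendsto_zero
      (fun n : ℕ => (((√n)⁻¹ * ∑ k ∈ Finset.Ico j n, X k ω : ℝ) : EReal)) hhead]
    refine limsup_congr (eventually_atTop.2 ⟨j, fun n hn => ?_⟩)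
    rw [Pi.add_apply, ← EReal.coe_add, ← mul_add, add_comm, Finset.sum_range_add_sum_Ico _ hn]
  simp_rw [hshift]
  refine .limsup fun n => ((Finset.measurable_sum _ fun k hk => ?_).const_mul _).coe_real_ereal
  exact (comap_measurable (X k)).mono (le_iSup₂_of_le k (Finset.mem_Ico.1 hk).1 le_rfl) le_rfl

section IID

variable {Ω : Type*} [MeasurableSpace Ω] {μ : Measure Ω} [IsProbabilityMeasure μ]
  {X : ℕ → Ω → ℝ}

lemma gaussianReal_Ioi_le_liminf_measure (hindep : iIndepFun X μ)
    (hident : ∀ i, IdentDistrib (X i) (X 0) μ μ) (h0 : μ[X 0] = 0) (h1 : μ[X 0 ^ 2] = 1)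
    (M : ℝ) :
    gaussianReal 0 1 (Set.Ioi M) ≤
      liminf (fun n : ℕ => μ {ω | M < (√n)⁻¹ * ∑ k ∈ Finset.range n, X k ω}) atTop := by
  have hclt := tendstoInDistribution_inv_sqrt_mul_sum HasLaw.id h0 h1 hindep hident
  simpa [Measure.map_apply_of_aemeasurable (hclt.forall_aemeasurable _) measurableSet_Ioi,
    Set.preimage, Set.mem_Ioi] using
    ProbabilityMeasure.le_liminf_measure_open_of_tendsto hclt.tendsto (isOpen_Ioi (a := M))

lemma ae_le_limsup_inv_sqrt_mul_sum (hmeas : ∀ i, Measurable (X i)) (hindep : iIndepFun X μ)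
    (hident : ∀ i, IdentDistrib (X i) (X 0) μ μ) (h0 : μ[X 0] = 0) (h1 : μ[X 0 ^ 2] = 1)
    (M : ℝ) :
    ∀ᵐ ω ∂μ, (M : EReal) ≤
      limsup (fun n : ℕ => (((√n)⁻¹ * ∑ k ∈ Finset.range n, X k ω : ℝ) : EReal)) atTop := by
  set L := fun ω => limsup (fun n : ℕ => (((√n)⁻¹ * ∑ k ∈ Finset.range n, X k ω : ℝ) : EReal))
    atTop
  set A : ℕ → Set Ω := fun n => {ω | M < (√n)⁻¹ * ∑ k ∈ Finset.range n, X k ω}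
  have hA (n : ℕ) : MeasurableSet (A n) :=
    measurableSet_lt measurable_const ((Finset.measurable_sum _ fun k _ => hmeas k).const_mul _)
  have hpos : 0 < μ {ω | (M : EReal) ≤ L ω} := calc
    0 < gaussianReal 0 1 (Set.Ioi M) :=
      pos_iff_ne_zero.2 fun h => by simpa using gaussianReal_absolutelyContinuous' 0 one_ne_zero h
    _ ≤ liminf (fun n => μ (A n)) atTop := gaussianReal_Ioi_le_liminf_measure hindep hident h0 h1 M
    _ ≤ limsup (fun n => μ (A n)) atTop := liminf_le_limsup
    _ ≤ μ (limsup A atTop) := limsup_measure_le_measure_limsup μ hA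
    _ ≤ μ {ω | (M : EReal) ≤ L ω} := measure_mono fun ω hω =>
      le_limsup_of_frequently_le ((mem_limsup_iff_frequently_mem.1 hω).mono
        fun n hn => (EReal.coe_lt_coe_iff.2 hn).le)
  have h_le (i : ℕ) : MeasurableSpace.comap (X i) inferInstance ≤ ‹MeasurableSpace Ω› :=
    (hmeas i).comap_le
  have htail : MeasurableSet[limsup (fun i => MeasurableSpace.comap (X i) inferInstance) atTop]
      {ω | (M : EReal) ≤ L ω} := measurable_limsup_inv_sqrt_mul_sum measurableSet_Ici
  have hone : μ {ω | (M : EReal) ≤ L ω} = 1 :=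
    (measure_zero_or_one_of_measurableSet_limsup_atTop h_le hindep.iIndep htail).resolve_left
      hpos.ne'
  rw [ae_iff_measure_eq, hone, measure_univ]
  exact (limsup_le_iSup.trans (iSup_le h_le) _ htail).nullMeasurableSet

theorem ae_limsup_inv_sqrt_mul_sum_eq_top (hmeas : ∀ i, Measurable (X i))
    (hindep : iIndepFun X μ) (hident : ∀ i, IdentDistrib (X i) (X 0) μ μ) (h0 : μ[X 0] = 0)
    (h1 : μ[X 0 ^ 2] = 1) :
    ∀ᵐ ω ∂μ, limsup (fun n : ℕ => (((√n)⁻¹ * ∑ k ∈ Finset.range n, X k ω : ℝ) : EReal))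
      atTop = ⊤ := by
  filter_upwards [ae_all_iff.2 fun m : ℕ => ae_le_limsup_inv_sqrt_mul_sum hmeas hindep hident
    h0 h1 m] with ω hω
  refine (EReal.eq_top_iff_forall_lt _).2 fun y => ?_
  obtain ⟨m, hm⟩ := exists_nat_gt y
  exact (EReal.coe_lt_coe_iff.2 hm).trans_le (hω m)

end IID

/-- With probability 1, `limsup Sₙ/√n = +∞` for the simple symmetric random walk. -/
theorem limsup_div_sqrt_eq_top
    (Ω : Type*) [MeasurableSpace Ω] (μ : Measure Ω) [IsProbabilityMeasure μ]
    (B : ℕ → Ω → ℝ) (hBmeas : ∀ i, Measurable (B i))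
    (hBindep : iIndepFun B μ)
    (hB01 : ∀ i ω, B i ω = 0 ∨ B i ω = 1)
    (hB1 : ∀ i, μ {ω | B i ω = 1} = 1 / 2)
    (hB0 : ∀ i, μ {ω | B i ω = 0} = 1 / 2)
    (S : ℕ → Ω → ℝ)
    (hS : ∀ k ω, S k ω = ∑ i ∈ Finset.range k, (2 * B (i + 1) ω - 1)) :
    ∀ᵐ ω ∂μ,
      Filter.limsup (fun n : ℕ => ((S n ω / Real.sqrt n : ℝ) : EReal)) atTop = ⊤ := by
  set X : ℕ → Ω → ℝ := fun i ω => 2 * B (i + 1) ω - 1 with hX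
  have hlaw (i : ℕ) :
      μ.map (B i) = (2⁻¹ : ℝ≥0∞) • Measure.dirac 0 + (2⁻¹ : ℝ≥0∞) • Measure.dirac 1 := by
    rw [Measure.map_eq_smul_dirac_add_smul_dirac (hBmeas i) zero_ne_one (hB01 i)]
    change μ {ω | B i ω = 0} • _ + μ {ω | B i ω = 1} • _ = _
    rw [hB0, hB1, one_div]
  have hident (i : ℕ) : IdentDistrib (X i) (X 0) μ μ :=
    (⟨(hBmeas _).aemeasurable, (hBmeas _).aemeasurable, by rw [hlaw, hlaw]⟩ :
      IdentDistrib (B (i + 1)) (B 1) μ μ).comp (u := fun x => 2 * x - 1) (by fun_prop)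
  have hindep : iIndepFun X μ :=
    (hBindep.precomp Nat.succ_injective).comp (fun _ x => 2 * x - 1) fun _ => by fun_prop
  have hsq (ω : Ω) : X 0 ω ^ 2 = 1 := by rcases hB01 1 ω with h | h <;> norm_num [hX, h]
  filter_upwards [ae_limsup_inv_sqrt_mul_sum_eq_top (fun i => by fun_prop) hindep hident
    (integral_two_mul_sub_one_eq_zero (hBmeas 1) (hlaw 1)) (by simp [hsq])] with ω hω
  simpa only [hS, div_eq_inv_mul] using hω
end

section
/- For all integers 0 < k < n, exp(−n/(6·k·(n−k))) ≤ p_{2k,2n}/d_{k,n} ≤ exp(n/(24·k·(n−k))), where p_{2k,2n}/d_{k,n} = π·√(k(n−k))·binom(2k,k)·binom(2(n−k),n−k)·2^{−2n}. -/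
/-!
Writing `a j = √(π j) · C(2j, j) / 4 ^ j`, the ratio `p_{2k,2n} / d_{k,n}` is `a k · a (n - k)`.
Through the Stirling sequence `s n = n! / (√(2n) (n/e)^n)` one has `a j = √π · s (2j) / s j ^ 2`,
and `s` satisfies the effective Stirling bounds `√π ≤ s n ≤ √π · exp (1 / (12 n))`, the upper one
obtained by summing Robbins' bound `log s i - log s (i + 1) ≤ 1 / (12 i (i + 1))`. Hence
`exp (-1 / (6j)) ≤ a j ≤ exp (1 / (24 j))`, and multiplying over `j = k, n - k` gives the theorem
since `1/k + 1/(n - k) = n / (k (n - k))`.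
-/

open Real Filter Topology Stirling
open scoped Nat

theorem Stirling.stirlingSeq_le_sqrt_pi_mul_exp {n : ℕ} (hn : n ≠ 0) :
    stirlingSeq n ≤ √π * exp (1 / (12 * n)) := by
  set g : ℕ → ℝ := fun i ↦ log (stirlingSeq (i + 1)) - 1 / (12 * (i + 1 : ℕ))
  -- Robbins' bound telescopes: `1 / (12 i (i + 1)) = 1 / (12 i) - 1 / (12 (i + 1))`.
  have hg : Monotone g := monotone_nat_of_le_succ fun i ↦ by
    have := log_stirlingSeq_sdiff_le (i + 1)
    have h : (1 : ℝ) / (12 * (i + 1 : ℕ) * ((i + 1 : ℕ) + 1)) =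
        1 / (12 * (i + 1 : ℕ)) - 1 / (12 * (i + 1 + 1 : ℕ)) := by
      push_cast; field_simp; ring
    simp only [g]
    linarith
  have hlim : Tendsto g atTop (𝓝 (log √π - 0)) := by
    refine ((continuousAt_log (by positivity)).tendsto.comp
      (tendsto_stirlingSeq_sqrt_pi.comp (tendsto_add_atTop_nat 1))).sub ?_
    exact tendsto_const_nhds.div_atTop <|
      (tendsto_natCast_atTop_atTop.comp (tendsto_add_atTop_nat 1)).const_mul_atTop (by norm_num)
  obtain ⟨i, rfl⟩ := Nat.exists_eq_succ_of_ne_zero hn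
  have hle : g i ≤ log √π - 0 := hg.ge_of_tendsto hlim i
  have hpos : 0 < stirlingSeq (i + 1) := stirlingSeq'_pos i
  calc stirlingSeq (i + 1) = exp (log (stirlingSeq (i + 1))) := (exp_log hpos).symm
    _ ≤ exp (log √π + 1 / (12 * (i + 1 : ℕ))) := exp_le_exp.2 (by simp only [g] at hle; linarith)
    _ = √π * exp (1 / (12 * (i + 1 : ℕ))) := by rw [exp_add, exp_log (by positivity)]

theorem Nat.sqrt_pi_mul_centralBinom_div_four_pow_eq_stirlingSeq {j : ℕ} (hj : j ≠ 0) :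
    √(π * j) * j.centralBinom / 4 ^ j = √π * stirlingSeq (2 * j) / stirlingSeq j ^ 2 := by
  have hfac (n : ℕ) (hn : n ≠ 0) : (n ! : ℝ) = stirlingSeq n * (√(2 * n) * (n / exp 1) ^ n) := by
    rw [stirlingSeq, div_mul_cancel₀]; positivity
  have hcb : (j.centralBinom : ℝ) * j ! ^ 2 = (2 * j) ! := by
    rw [Nat.centralBinom_eq_two_mul_choose, sq, ← mul_assoc]
    exact_mod_cast two_mul j ▸ Nat.add_choose_mul_factorial_mul_factorial j j
  have h4 : √(2 * ((2 * j : ℕ) : ℝ)) = 2 * √j := by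
    rw [show (2 : ℝ) * ((2 * j : ℕ) : ℝ) = 2 ^ 2 * j by push_cast; ring, sqrt_mul (by norm_num),
      sqrt_sq (by norm_num)]
  rw [hfac j hj, hfac (2 * j) (by omega), h4, mul_pow, mul_pow, sq_sqrt (by positivity),
    Nat.cast_mul, Nat.cast_two] at hcb
  have hs : 0 < stirlingSeq j := (Real.sqrt_pos.2 pi_pos).trans_le (sqrt_pi_le_stirlingSeq hj)
  rw [sqrt_mul pi_pos.le, div_eq_div_iff (by positivity) (by positivity),
    show (4 : ℝ) ^ j = 2 ^ (2 * j) by rw [pow_mul]; norm_num]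
  refine mul_right_cancel₀ (b := 2 * √j * (j / exp 1) ^ (2 * j)) (by positivity) ?_
  linear_combination √π * hcb +
    2 * √π * j.centralBinom * stirlingSeq j ^ 2 * (j / exp 1) ^ (2 * j) * sq_sqrt j.cast_nonneg

theorem Nat.exp_neg_le_sqrt_pi_mul_centralBinom_div_four_pow {j : ℕ} (hj : j ≠ 0) :
    exp (-(1 / (6 * j))) ≤ √(π * j) * j.centralBinom / 4 ^ j := by
  have hpos : 0 < stirlingSeq j := (Real.sqrt_pos.2 pi_pos).trans_le (sqrt_pi_le_stirlingSeq hj)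
  rw [Nat.sqrt_pi_mul_centralBinom_div_four_pow_eq_stirlingSeq hj, le_div_iff₀ (by positivity)]
  calc exp (-(1 / (6 * j))) * stirlingSeq j ^ 2
      ≤ exp (-(1 / (6 * j))) * (√π * exp (1 / (12 * j))) ^ 2 := by
        gcongr; exact stirlingSeq_le_sqrt_pi_mul_exp hj
    _ = √π * √π := by
      rw [mul_pow, ← exp_nat_mul, mul_left_comm, ← exp_add,
        show -(1 / (6 * j)) + ((2 : ℕ) : ℝ) * (1 / (12 * j)) = 0 by push_cast; ring,
        exp_zero, mul_one, sq]
    _ ≤ √π * stirlingSeq (2 * j) := by gcongr; exact sqrt_pi_le_stirlingSeq (by omega)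

theorem Nat.sqrt_pi_mul_centralBinom_div_four_pow_le_exp {j : ℕ} (hj : j ≠ 0) :
    √(π * j) * j.centralBinom / 4 ^ j ≤ exp (1 / (24 * j)) := by
  have hs := sqrt_pi_le_stirlingSeq hj
  have hpos : 0 < stirlingSeq j := (Real.sqrt_pos.2 pi_pos).trans_le hs
  rw [Nat.sqrt_pi_mul_centralBinom_div_four_pow_eq_stirlingSeq hj, div_le_iff₀ (by positivity)]
  calc √π * stirlingSeq (2 * j)
      ≤ √π * (√π * exp (1 / (12 * (2 * j : ℕ)))) := by
        gcongr; exact stirlingSeq_le_sqrt_pi_mul_exp (by omega)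
    _ = exp (1 / (24 * j)) * √π ^ 2 := by push_cast; ring_nf
    _ ≤ exp (1 / (24 * j)) * stirlingSeq j ^ 2 := by gcongr

/-- For `0 < k < n`,
`exp(-n/(6k(n-k))) ≤ p_{2k,2n}/d_{k,n} ≤ exp(n/(24k(n-k)))`, where
`p_{2k,2n}/d_{k,n} = π·√(k(n-k))·C(2k,k)·C(2(n-k),n-k)·2^{-2n}`. -/
theorem ratio_p_d_bounds (n k : ℕ) (hk : 0 < k) (hkn : k < n) :
    Real.exp (-(n : ℝ) / (6 * k * (n - k : ℕ))) ≤
        Real.pi * Real.sqrt ((k * (n - k) : ℕ) : ℝ) *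
          ((Nat.choose (2 * k) k : ℝ) * (Nat.choose (2 * (n - k)) (n - k) : ℝ) / 2 ^ (2 * n)) ∧
      Real.pi * Real.sqrt ((k * (n - k) : ℕ) : ℝ) *
          ((Nat.choose (2 * k) k : ℝ) * (Nat.choose (2 * (n - k)) (n - k) : ℝ) / 2 ^ (2 * n)) ≤
        Real.exp ((n : ℝ) / (24 * k * (n - k : ℕ))) := by
  obtain ⟨m, rfl⟩ := Nat.exists_eq_add_of_le hkn.le
  have hk0 : k ≠ 0 := hk.ne'
  have hm0 : m ≠ 0 := by omega
  have hsplit : π * √((k * m : ℕ) : ℝ) * ((2 * k).choose k * (2 * m).choose m / 2 ^ (2 * (k + m)))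
      = √(π * k) * k.centralBinom / 4 ^ k * (√(π * m) * m.centralBinom / 4 ^ m) := by
    rw [Nat.centralBinom_eq_two_mul_choose, Nat.centralBinom_eq_two_mul_choose, Nat.cast_mul,
      sqrt_mul k.cast_nonneg, sqrt_mul pi_pos.le, sqrt_mul pi_pos.le, pow_mul, pow_add]
    field_simp
    rw [sq_sqrt pi_pos.le]
    ring
  have hlow :
      exp (-((k + m : ℕ) : ℝ) / (6 * k * m)) = exp (-(1 / (6 * k))) * exp (-(1 / (6 * m))) := by
    rw [← exp_add]; congr 1; push_cast; field_simp; ring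
  have hup : exp (((k + m : ℕ) : ℝ) / (24 * k * m)) = exp (1 / (24 * k)) * exp (1 / (24 * m)) := by
    rw [← exp_add]; congr 1; push_cast; field_simp; ring
  simp only [Nat.add_sub_cancel_left, hsplit, hlow, hup]
  exact ⟨mul_le_mul (Nat.exp_neg_le_sqrt_pi_mul_centralBinom_div_four_pow hk0)
      (Nat.exp_neg_le_sqrt_pi_mul_centralBinom_div_four_pow hm0) (exp_pos _).le (by positivity),
    mul_le_mul (Nat.sqrt_pi_mul_centralBinom_div_four_pow_le_exp hk0)
      (Nat.sqrt_pi_mul_centralBinom_div_four_pow_le_exp hm0) (by positivity) (exp_pos _).le⟩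
end

section
/- For all integers 0 < k < n, |p_{2k,2n} − d_{k,n}| ≤ n/(6·π·(k·(n−k))^{3/2}). -/
/-! Write `r n = C(2n, n) / 4 ^ n`, so that `p_{2k,2n} = r k * r m` with `m = n - k`.
Comparing with Wallis' product gives `r n ^ 2 * (2n + 1) = 1 / W n → 2 / π`, and the recursion
`r (n + 1) = r n * (2n + 1) / (2n + 2)` makes `r n ^ 2 * (n + 1/4)` increasing and
`r n ^ 2 * (n + 1/3)` decreasing, so both tend to `1 / π` from opposite sides. Hence `p_{2k,2n}`
lies between `1 / (π √((k + 1/3)(m + 1/3)))` and `d_{k,n} = 1 / (π √(km))`, and since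
`(k + 1/3)(m + 1/3) = km + n/3 + 1/9` and `4km ≤ n²`, the gap between these two is at most
`n / (6π (km)^{3/2})`. -/

open Real Filter Topology

noncomputable def centralBinomRatio (n : ℕ) : ℝ := n.centralBinom / 4 ^ n

lemma centralBinomRatio_pos (n : ℕ) : 0 < centralBinomRatio n := by
  unfold centralBinomRatio
  have := n.centralBinom_pos
  positivity

lemma centralBinomRatio_succ (n : ℕ) :
    centralBinomRatio (n + 1) = centralBinomRatio n * ((2 * n + 1) / (2 * n + 2)) := by
  have h : ((n + 1 : ℕ) : ℝ) * (n + 1).centralBinom = 2 * (2 * n + 1) * n.centralBinom := by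
    exact_mod_cast Nat.succ_mul_centralBinom_succ n
  unfold centralBinomRatio
  push_cast at h
  rw [pow_succ]
  field_simp
  linear_combination 2 * h

lemma centralBinomRatio_sq_mul_two_mul_add_one_mul_W (n : ℕ) :
    centralBinomRatio n ^ 2 * (2 * n + 1) * Wallis.W n = 1 := by
  induction n with
  | zero => simp [centralBinomRatio, Wallis.W]
  | succ n ih =>
    rw [centralBinomRatio_succ, Wallis.W_succ]
    push_cast
    field_simp
    linear_combination (2 * (n : ℝ) + 3) * ih

lemma tendsto_centralBinomRatio_sq_mul_add (c : ℝ) :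
    Tendsto (fun n : ℕ ↦ centralBinomRatio n ^ 2 * (n + c)) atTop (𝓝 π⁻¹) := by
  have hW : Tendsto (fun n ↦ (Wallis.W n)⁻¹) atTop (𝓝 (π / 2)⁻¹) :=
    Wallis.tendsto_W_nhds_pi_div_two.inv₀ (by positivity)
  have hq := tendsto_add_mul_div_add_mul_atTop_nhds c 1 1 (two_ne_zero (α := ℝ))
  convert hW.mul hq using 1
  · ext n
    have hWn := centralBinomRatio_sq_mul_two_mul_add_one_mul_W n
    have := (Wallis.W_pos n).ne'
    field_simp
    linear_combination (n + c) * hWn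
  · field_simp

lemma centralBinomRatio_sq_mul_add_quarter_le (n : ℕ) :
    centralBinomRatio n ^ 2 * (n + 1 / 4) ≤ π⁻¹ := by
  refine Monotone.ge_of_tendsto (f := fun n : ℕ ↦ centralBinomRatio n ^ 2 * (n + 1 / 4))
    (monotone_nat_of_le_succ fun n ↦ ?_) (tendsto_centralBinomRatio_sq_mul_add _) n
  have h : (n + 1 / 4 : ℝ) * (2 * n + 2) ^ 2 ≤ (2 * n + 1) ^ 2 * (n + 1 + 1 / 4) := by
    nlinarith
  rw [centralBinomRatio_succ]
  push_cast
  rw [mul_pow, mul_assoc, div_pow]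
  gcongr
  rw [div_mul_eq_mul_div, le_div_iff₀ (by positivity)]
  exact h

lemma le_centralBinomRatio_sq_mul_add_third (n : ℕ) :
    π⁻¹ ≤ centralBinomRatio n ^ 2 * (n + 1 / 3) := by
  refine Antitone.le_of_tendsto (f := fun n : ℕ ↦ centralBinomRatio n ^ 2 * (n + 1 / 3))
    (antitone_nat_of_succ_le fun n ↦ ?_) (tendsto_centralBinomRatio_sq_mul_add _) n
  have h : (2 * n + 1) ^ 2 * (n + 1 + 1 / 3) ≤ (n + 1 / 3 : ℝ) * (2 * n + 2) ^ 2 := by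
    nlinarith
  rw [centralBinomRatio_succ]
  push_cast
  rw [mul_pow, mul_assoc, div_pow]
  gcongr
  rw [div_mul_eq_mul_div, div_le_iff₀ (by positivity)]
  exact h

lemma centralBinomRatio_le_one_div_sqrt {n : ℕ} (hn : 0 < n) :
    centralBinomRatio n ≤ 1 / √(π * n) := by
  have hsq : centralBinomRatio n ^ 2 * (π * n) ≤ 1 := by
    calc centralBinomRatio n ^ 2 * (π * n)
        ≤ π * (centralBinomRatio n ^ 2 * (n + 1 / 4)) := by nlinarith [pi_pos]
      _ ≤ π * π⁻¹ := by gcongr; exact centralBinomRatio_sq_mul_add_quarter_le n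
      _ = 1 := mul_inv_cancel₀ pi_ne_zero
  have hnonneg := mul_nonneg (centralBinomRatio_pos n).le (sqrt_nonneg (π * n))
  rw [le_div_iff₀ (by positivity), ← pow_le_one_iff_of_nonneg hnonneg two_ne_zero, mul_pow,
    sq_sqrt (by positivity)]
  exact hsq

lemma one_div_sqrt_le_centralBinomRatio (n : ℕ) :
    1 / √(π * (n + 1 / 3)) ≤ centralBinomRatio n := by
  have hsq : 1 ≤ centralBinomRatio n ^ 2 * (π * (n + 1 / 3)) := by
    calc 1 = π * π⁻¹ := (mul_inv_cancel₀ pi_ne_zero).symm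
      _ ≤ π * (centralBinomRatio n ^ 2 * (n + 1 / 3)) := by
        gcongr; exact le_centralBinomRatio_sq_mul_add_third n
      _ = _ := by ring
  have hnonneg := mul_nonneg (centralBinomRatio_pos n).le (sqrt_nonneg (π * (n + 1 / 3)))
  rw [div_le_iff₀ (by positivity), ← one_le_pow_iff_of_nonneg hnonneg two_ne_zero, mul_pow,
    sq_sqrt (by positivity)]
  exact hsq

lemma one_div_sqrt_sub_one_div_sqrt_le {x t : ℝ} (hx : 0 < x) (ht : 0 ≤ t)
    (h : 4 * x ≤ t ^ 2) :
    1 / √x - 1 / √(x + t / 3 + 1 / 9) ≤ t / (6 * x ^ ((3 : ℝ) / 2)) := by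
  have hx32 : x ^ ((3 : ℝ) / 2) = √x ^ 3 := by
    rw [sqrt_eq_rpow, ← rpow_natCast, ← rpow_mul hx.le]
    norm_num
  rw [hx32]
  set u := √x
  set v := √(x + t / 3 + 1 / 9)
  have hu : 0 < u := sqrt_pos.2 hx
  have hu2 : u ^ 2 = x := sq_sqrt hx.le
  have hv2 : v ^ 2 = x + t / 3 + 1 / 9 := sq_sqrt (by positivity)
  have huv : u ≤ v := sqrt_le_sqrt (by linarith)
  have hv : 0 < v := hu.trans_le huv
  -- The tangent-line bound `(v² - u²) / (2u³)` would overshoot by `1 / (18u³)`.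
  have key : 6 * u ^ 2 * (t / 3 + 1 / 9) ≤ t * v * (u + v) := by
    nlinarith [mul_le_mul_of_nonneg_left (mul_le_mul_of_nonneg_left huv hu.le) ht]
  have hdiff : 6 * u ^ 2 * (v - u) ≤ t * v := by
    refine le_of_mul_le_mul_right ?_ (add_pos hu hv)
    linear_combination key + 6 * u ^ 2 * hv2 - 6 * u ^ 2 * hu2
  rw [div_sub_div _ _ hu.ne' hv.ne', div_le_div_iff₀ (by positivity) (by positivity)]
  linear_combination u * hdiff

lemma one_div_sqrt_pi_mul_mul_one_div_sqrt_pi_mul {a : ℝ} (ha : 0 ≤ a) (b : ℝ) :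
    1 / √(π * a) * (1 / √(π * b)) = 1 / (π * √(a * b)) := by
  rw [one_div_mul_one_div, ← sqrt_mul (by positivity),
    show π * a * (π * b) = π ^ 2 * (a * b) by ring, sqrt_mul (by positivity), sqrt_sq pi_pos.le]

lemma choose_mul_choose_div_eq_centralBinomRatio_mul (k m : ℕ) :
    (Nat.choose (2 * k) k : ℝ) * Nat.choose (2 * m) m / 2 ^ (2 * (k + m)) =
      centralBinomRatio k * centralBinomRatio m := by
  rw [centralBinomRatio, centralBinomRatio, Nat.centralBinom, Nat.centralBinom, mul_add, pow_add,
    pow_mul, pow_mul]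
  norm_num
  field_simp

/-- For `0 < k < n`, `|p_{2k,2n} - d_{k,n}| ≤ n/(6π(k(n-k))^{3/2})`, where
`p_{2k,2n} = C(2k,k)·C(2(n-k),n-k)·2^{-2n}` and `d_{k,n} = 1/(π√(k(n-k)))`. -/
theorem abs_p_sub_d_le (n k : ℕ) (hk : 0 < k) (hkn : k < n) :
    |(Nat.choose (2 * k) k : ℝ) * (Nat.choose (2 * (n - k)) (n - k) : ℝ) / 2 ^ (2 * n) -
        1 / (Real.pi * Real.sqrt ((k * (n - k) : ℕ) : ℝ))| ≤
      (n : ℝ) / (6 * Real.pi * ((k * (n - k) : ℕ) : ℝ) ^ ((3 : ℝ) / 2)) := by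
  obtain ⟨m, rfl⟩ : ∃ m, n = k + m := ⟨n - k, by omega⟩
  have hm : 0 < m := by omega
  rw [Nat.add_sub_cancel_left, choose_mul_choose_div_eq_centralBinomRatio_mul]
  push_cast
  have hupper : centralBinomRatio k * centralBinomRatio m ≤ 1 / (π * √(k * m)) := by
    rw [← one_div_sqrt_pi_mul_mul_one_div_sqrt_pi_mul (Nat.cast_nonneg k)]
    exact mul_le_mul (centralBinomRatio_le_one_div_sqrt hk) (centralBinomRatio_le_one_div_sqrt hm)
      (centralBinomRatio_pos m).le (by positivity)
  have hlower : 1 / (π * √(k * m + (k + m) / 3 + 1 / 9)) ≤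
      centralBinomRatio k * centralBinomRatio m := by
    have := mul_le_mul (one_div_sqrt_le_centralBinomRatio k)
      (one_div_sqrt_le_centralBinomRatio m) (by positivity) (centralBinomRatio_pos k).le
    rwa [one_div_sqrt_pi_mul_mul_one_div_sqrt_pi_mul (by positivity),
      show ((k : ℝ) + 1 / 3) * (m + 1 / 3) = k * m + (k + m) / 3 + 1 / 9 by ring] at this
  have hgap := one_div_sqrt_sub_one_div_sqrt_le (x := k * m) (t := k + m) (by positivity)
    (by positivity) (by nlinarith [sq_nonneg ((k : ℝ) - m)])
  rw [abs_sub_comm, abs_of_nonneg (sub_nonneg.2 hupper)]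
  calc 1 / (π * √(k * m)) - centralBinomRatio k * centralBinomRatio m
      ≤ (1 / √(k * m) - 1 / √(k * m + (k + m) / 3 + 1 / 9)) / π := by
        rw [sub_div, div_div, div_div, mul_comm _ π, mul_comm _ π]
        linarith
    _ ≤ (k + m) / (6 * (k * m) ^ ((3 : ℝ) / 2)) / π := by gcongr
    _ = (k + m) / (6 * π * (k * m) ^ ((3 : ℝ) / 2)) := by ring
end

section
/- For every real δ with 0 < δ ≤ 1/2 and all integers 0 < k < n satisfying δ ≤ k/n ≤ 1 − δ, it holds that |p_{2k,2n} − d_{k,n}| ≤ 1/(6·π·n²·(δ(1−δ))^{3/2}). -/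
/-!
Write `u m` for `centralProb m = C(2m, m) / 4^m`, so that `p_{2k,2n} = u k * u (n - k)`.
Wallis' product gives `π u_m² (m + c) → 1` for every constant `c`, and comparing consecutive
terms shows that this sequence increases for `c = 1/4` and decreases for `c = 1/3`. Hence
`1 / √(π (m + 1/3)) ≤ u m ≤ 1 / √(π (m + 1/4))`, which traps `p_{2k,2n}` between
`1 / (π √(x + Δ))` and `d_{k,n} = 1 / (π √x)`, where `x = k (n - k) ≥ δ (1 - δ) n²` and
`Δ = (3n + 1)/9`. Finally `1/√x - 1/√(x + Δ) ≤ Δ / (√x (2x + Δ))`, since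
`√x √(x + Δ) + (x + Δ) ≥ 2x + Δ`.
-/

open Filter Real Topology

noncomputable def centralProb (m : ℕ) : ℝ := (m.centralBinom : ℝ) / 4 ^ m

lemma centralProb_pos (m : ℕ) : 0 < centralProb m := by
  have := m.centralBinom_pos
  unfold centralProb
  positivity

lemma centralProb_succ (m : ℕ) :
    centralProb (m + 1) = centralProb m * ((2 * m + 1) / (2 * m + 2)) := by
  have h : ((m : ℝ) + 1) * (m + 1).centralBinom = 2 * (2 * m + 1) * m.centralBinom := by
    exact_mod_cast m.succ_mul_centralBinom_succ
  unfold centralProb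
  rw [pow_succ]
  field_simp
  linear_combination 2 * h

lemma centralProb_sq_mul_W (m : ℕ) : centralProb m ^ 2 * (2 * m + 1) * Wallis.W m = 1 := by
  induction m with
  | zero => simp [centralProb, Wallis.W]
  | succ m ih =>
    rw [centralProb_succ, Wallis.W_succ]
    push_cast
    field_simp
    linear_combination (2 * (m : ℝ) + 3) * ih

lemma tendsto_pi_mul_centralProb_sq_mul_add (c : ℝ) :
    Tendsto (fun m : ℕ ↦ π * centralProb m ^ 2 * (m + c)) atTop (𝓝 1) := by
  have hW := (Wallis.tendsto_W_nhds_pi_div_two.inv₀ (by positivity)).const_mul (π / 2)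
  have hq := tendsto_add_mul_div_add_mul_atTop_nhds (2 * c) 1 2 (two_ne_zero (α := ℝ))
  convert hq.mul hW using 1
  · ext m
    have h := centralProb_sq_mul_W m
    have := Wallis.W_pos m
    field_simp
    linear_combination ((m : ℝ) + c) * h
  · field_simp

lemma pi_mul_centralProb_sq_mul_add_succ_sub (c : ℝ) (m : ℕ) :
    π * centralProb (m + 1) ^ 2 * ((m + 1 : ℕ) + c) - π * centralProb m ^ 2 * (m + c) =
      π * centralProb m ^ 2 * (((1 - 4 * c) * m + 1 - 3 * c) / (2 * m + 2) ^ 2) := by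
  rw [centralProb_succ]
  push_cast
  field_simp
  ring

lemma pi_mul_centralProb_sq_mul_le (m : ℕ) : π * centralProb m ^ 2 * (m + 1 / 4) ≤ 1 := by
  refine Monotone.ge_of_tendsto (monotone_nat_of_le_succ fun j ↦ sub_nonneg.1 ?_)
    (tendsto_pi_mul_centralProb_sq_mul_add _) m
  rw [pi_mul_centralProb_sq_mul_add_succ_sub]
  norm_num
  positivity

lemma one_le_pi_mul_centralProb_sq_mul (m : ℕ) : 1 ≤ π * centralProb m ^ 2 * (m + 1 / 3) := by
  refine Antitone.le_of_tendsto (antitone_nat_of_succ_le fun j ↦ sub_nonpos.1 ?_)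
    (tendsto_pi_mul_centralProb_sq_mul_add _) m
  rw [pi_mul_centralProb_sq_mul_add_succ_sub]
  norm_num
  rw [neg_div, mul_neg, neg_nonpos]
  positivity

lemma le_one_div_mul_sqrt {c p z : ℝ} (hc : 0 < c) (hp : 0 ≤ p) (hz : 0 < z)
    (h : (c * p) ^ 2 * z ≤ 1) : p ≤ 1 / (c * √z) := by
  rw [le_div_iff₀ (by positivity), ← mul_assoc, mul_comm p,
    ← Real.sqrt_sq (by positivity : 0 ≤ c * p), ← Real.sqrt_mul (sq_nonneg _)]
  exact Real.sqrt_le_one.mpr h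

lemma one_div_mul_sqrt_le {c p z : ℝ} (hc : 0 < c) (hp : 0 ≤ p) (hz : 0 < z)
    (h : 1 ≤ (c * p) ^ 2 * z) : 1 / (c * √z) ≤ p := by
  rw [div_le_iff₀ (by positivity), ← mul_assoc, mul_comm p,
    ← Real.sqrt_sq (by positivity : 0 ≤ c * p), ← Real.sqrt_mul (sq_nonneg _)]
  exact Real.one_le_sqrt.mpr h

lemma centralProb_mul_le (k l : ℕ) {x : ℝ} (hx : 0 < x)
    (hxkl : x ≤ (k + 1 / 4) * (l + 1 / 4)) :
    centralProb k * centralProb l ≤ 1 / (π * √x) := by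
  refine le_one_div_mul_sqrt pi_pos
    (mul_pos (centralProb_pos k) (centralProb_pos l)).le hx ?_
  have hk := pi_mul_centralProb_sq_mul_le k
  have hl := pi_mul_centralProb_sq_mul_le l
  calc (π * (centralProb k * centralProb l)) ^ 2 * x
      ≤ (π * (centralProb k * centralProb l)) ^ 2 * ((k + 1 / 4) * (l + 1 / 4)) := by gcongr
    _ = (π * centralProb k ^ 2 * (k + 1 / 4)) * (π * centralProb l ^ 2 * (l + 1 / 4)) := by ring
    _ ≤ 1 := mul_le_one₀ hk (by positivity) hl

lemma one_div_le_centralProb_mul (k l : ℕ) :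
    1 / (π * √((k + 1 / 3) * (l + 1 / 3))) ≤ centralProb k * centralProb l := by
  refine one_div_mul_sqrt_le pi_pos
    (mul_pos (centralProb_pos k) (centralProb_pos l)).le (by positivity) ?_
  calc 1 ≤ (π * centralProb k ^ 2 * (k + 1 / 3)) * (π * centralProb l ^ 2 * (l + 1 / 3)) :=
        one_le_mul_of_one_le_of_one_le (one_le_pi_mul_centralProb_sq_mul k)
          (one_le_pi_mul_centralProb_sq_mul l)
    _ = (π * (centralProb k * centralProb l)) ^ 2 * ((k + 1 / 3) * (l + 1 / 3)) := by ring

lemma inv_sqrt_sub_inv_sqrt_add_le {x Δ : ℝ} (hx : 0 < x) (hΔ : 0 ≤ Δ) :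
    1 / √x - 1 / √(x + Δ) ≤ Δ / (√x * (2 * x + Δ)) := by
  set a := √x
  set b := √(x + Δ)
  have ha : 0 < a := Real.sqrt_pos.2 hx
  have ha2 : a ^ 2 = x := Real.sq_sqrt hx.le
  have hb2 : b ^ 2 = x + Δ := Real.sq_sqrt (by linarith)
  have hab : a ≤ b := Real.sqrt_le_sqrt (by linarith)
  calc 1 / a - 1 / b = Δ / (a * (a * b + b ^ 2)) := by
        rw [div_sub_div _ _ ha.ne' (ha.trans_le hab).ne',
          div_eq_div_iff (by positivity) (by positivity)]
        linear_combination a * b * (hb2 - ha2)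
    _ ≤ Δ / (a * (2 * x + Δ)) :=
        div_le_div_of_nonneg_left hΔ (by positivity) (by nlinarith)

lemma inv_sqrt_sub_inv_sqrt_le {s x n : ℝ} (hs : 0 < s) (hs4 : s ≤ 1 / 4) (hn : 0 < n)
    (hx : s * n ^ 2 ≤ x) :
    1 / √x - 1 / √(x + (3 * n + 1) / 9) ≤ 1 / (6 * n ^ 2 * s ^ ((3 : ℝ) / 2)) := by
  have hkey : 6 * n * s * ((3 * n + 1) / 9) ≤ 2 * s * n ^ 2 + (3 * n + 1) / 9 := by
    nlinarith [mul_le_mul_of_nonneg_right hs4 hn.le]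
  set Δ := (3 * n + 1) / 9
  have hΔ : 0 ≤ Δ := by positivity
  have hx0 : 0 < x := (by positivity : 0 < s * n ^ 2).trans_le hx
  have hsx : √s * n ≤ √x := by
    rw [← Real.sqrt_sq hn.le, ← Real.sqrt_mul hs.le]
    exact Real.sqrt_le_sqrt hx
  have hs32 : s ^ ((3 : ℝ) / 2) = s * √s := by
    rw [show (3 : ℝ) / 2 = 1 + 1 / 2 by norm_num, rpow_add hs, rpow_one, Real.sqrt_eq_rpow]
  calc 1 / √x - 1 / √(x + Δ)
      ≤ Δ / (√x * (2 * x + Δ)) := inv_sqrt_sub_inv_sqrt_add_le hx0 hΔ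
    _ ≤ Δ / (√s * n * (2 * (s * n ^ 2) + Δ)) :=
        div_le_div_of_nonneg_left hΔ (by positivity)
          (mul_le_mul hsx (by linarith) (by positivity) (Real.sqrt_nonneg _))
    _ ≤ 1 / (6 * n ^ 2 * s ^ ((3 : ℝ) / 2)) := by
        rw [hs32, div_le_div_iff₀ (by positivity) (by positivity)]
        nlinarith [mul_nonneg (mul_nonneg (Real.sqrt_nonneg s) hn.le) (sub_nonneg.2 hkey)]

lemma mul_one_sub_mul_sq_le_mul_sub {δ k n : ℝ} (hlow : δ * n ≤ k)
    (hhigh : k ≤ (1 - δ) * n) :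
    δ * (1 - δ) * n ^ 2 ≤ k * (n - k) := by
  nlinarith [mul_nonneg (sub_nonneg.2 hlow) (sub_nonneg.2 hhigh)]

lemma choose_mul_choose_sub_div_two_pow {k n : ℕ} (hkn : k ≤ n) :
    (Nat.choose (2 * k) k : ℝ) * (Nat.choose (2 * (n - k)) (n - k) : ℝ) / 2 ^ (2 * n) =
      centralProb k * centralProb (n - k) := by
  obtain ⟨l, rfl⟩ := Nat.exists_eq_add_of_le hkn
  rw [Nat.add_sub_cancel_left, pow_mul, pow_add, mul_div_mul_comm]
  norm_num [centralProb, Nat.centralBinom_eq_two_mul_choose]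

theorem abs_p_sub_d_le_of_delta_general (δ : ℝ) (hδ0 : 0 < δ)
    (n k : ℕ) (hkn : k < n)
    (hlow : δ ≤ (k : ℝ) / n) (hhigh : (k : ℝ) / n ≤ 1 - δ) :
    |(Nat.choose (2 * k) k : ℝ) * (Nat.choose (2 * (n - k)) (n - k) : ℝ) / 2 ^ (2 * n) -
        1 / (Real.pi * Real.sqrt ((k * (n - k) : ℕ) : ℝ))| ≤
      1 / (6 * Real.pi * (n : ℝ) ^ 2 * (δ * (1 - δ)) ^ ((3 : ℝ) / 2)) := by
  have hn : (0 : ℝ) < n := by exact_mod_cast (k.zero_le.trans_lt hkn)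
  set l := n - k
  have hkl : (k : ℝ) + l = n := by exact_mod_cast Nat.add_sub_cancel' hkn.le
  have hs : 0 < δ * (1 - δ) := mul_pos hδ0 (by linarith)
  have hs4 : δ * (1 - δ) ≤ 1 / 4 := by nlinarith [sq_nonneg (2 * δ - 1)]
  have hx : δ * (1 - δ) * n ^ 2 ≤ k * l := by
    rw [show (l : ℝ) = n - k by linarith]
    exact mul_one_sub_mul_sq_le_mul_sub ((le_div_iff₀ hn).1 hlow) ((div_le_iff₀ hn).1 hhigh)
  have hx0 : (0 : ℝ) < k * l := (by positivity : 0 < δ * (1 - δ) * n ^ 2).trans_le hx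
  have hupper := centralProb_mul_le k l hx0 (by nlinarith)
  have hlower := one_div_le_centralProb_mul k l
  rw [show ((k : ℝ) + 1 / 3) * (l + 1 / 3) = k * l + (3 * n + 1) / 9 by rw [← hkl]; ring]
    at hlower
  rw [choose_mul_choose_sub_div_two_pow hkn.le, Nat.cast_mul, abs_sub_comm,
    abs_of_nonneg (sub_nonneg.2 hupper)]
  calc 1 / (π * √(k * l)) - centralProb k * centralProb l
      ≤ (1 / √(k * l) - 1 / √(k * l + (3 * n + 1) / 9)) / π := by
        rw [sub_div, div_div, div_div, mul_comm _ π, mul_comm _ π]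
        linarith
    _ ≤ 1 / (6 * n ^ 2 * (δ * (1 - δ)) ^ ((3 : ℝ) / 2)) / π := by
        gcongr
        exact inv_sqrt_sub_inv_sqrt_le hs hs4 hn hx
    _ = 1 / (6 * π * n ^ 2 * (δ * (1 - δ)) ^ ((3 : ℝ) / 2)) := by ring

/-- For `0 < δ ≤ 1/2` and `0 < k < n` with `δ ≤ k/n ≤ 1 - δ`,
`|p_{2k,2n} - d_{k,n}| ≤ 1/(6πn²(δ(1-δ))^{3/2})`. -/
theorem abs_p_sub_d_le_of_delta (δ : ℝ) (hδ0 : 0 < δ) (hδ : δ ≤ 1 / 2)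
    (n k : ℕ) (hk : 0 < k) (hkn : k < n)
    (hlow : δ ≤ (k : ℝ) / n) (hhigh : (k : ℝ) / n ≤ 1 - δ) :
    |(Nat.choose (2 * k) k : ℝ) * (Nat.choose (2 * (n - k)) (n - k) : ℝ) / 2 ^ (2 * n) -
        1 / (Real.pi * Real.sqrt ((k * (n - k) : ℕ) : ℝ))| ≤
      1 / (6 * Real.pi * (n : ℝ) ^ 2 * (δ * (1 - δ)) ^ ((3 : ℝ) / 2)) :=
  abs_p_sub_d_le_of_delta_general δ hδ0 n k hkn hlow hhigh
end

section
/- For all integers n ≥ 1 and 0 ≤ k ≤ n, the distribution of the time spent above the x-axis by the simple symmetric random walk of length 2n is symmetric: P(L_{2n} = 2k) = P(L_{2n} = 2(n−k)). -/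
/-!
Flipping every coin, `B i ↦ 1 - B i`, reflects the walk in the axis. The flipped coins are again
independent fair coins, so `L_{2n}` has the same law when computed from them; on the other hand,
since the walk moves by unit steps it cannot change sign without visiting `0`, so every step lies
above the axis for exactly one of the walk and its reflection. Hence `L_{2n}` and `2n - L_{2n}` are
identically distributed.
-/

open MeasureTheory ProbabilityTheory Finset

namespace TimeAboveAxis

noncomputable def walk (x : ℕ → ℝ) (k : ℕ) : ℝ := ∑ i ∈ range k, (2 * x (i + 1) - 1)

noncomputable def timeAbove (x : ℕ → ℝ) (N : ℕ) : ℕ :=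
  ∑ k ∈ Icc 1 N, if 0 < walk x k ∨ 0 < walk x (k - 1) then 1 else 0

lemma walk_succ (x : ℕ → ℝ) (k : ℕ) : walk x (k + 1) = walk x k + (2 * x (k + 1) - 1) :=
  sum_range_succ _ _

lemma walk_one_sub (x : ℕ → ℝ) (k : ℕ) : walk (fun i => 1 - x i) k = -walk x k := by
  simp only [walk, ← sum_neg_distrib]
  exact sum_congr rfl fun _ _ => by ring

lemma measurable_walk (k : ℕ) : Measurable fun x => walk x k := by
  unfold walk; fun_prop

lemma measurable_timeAbove (N : ℕ) : Measurable fun x => timeAbove x N := by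
  refine Finset.measurable_sum _ fun k _ => Measurable.ite ?_ measurable_const measurable_const
  exact (measurableSet_lt measurable_const (measurable_walk k)).union
    (measurableSet_lt measurable_const (measurable_walk (k - 1)))

variable {x : ℕ → ℝ}

lemma exists_walk_eq_intCast (hx : ∀ i, x i = 0 ∨ x i = 1) (k : ℕ) :
    ∃ z : ℤ, walk x k = z := by
  induction k with
  | zero => exact ⟨0, by simp [walk]⟩
  | succ k ih =>
    obtain ⟨z, hz⟩ := ih
    rcases hx (k + 1) with h | h
    · exact ⟨z - 1, by rw [walk_succ, hz, h]; push_cast; ring⟩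
    · exact ⟨z + 1, by rw [walk_succ, hz, h]; push_cast; ring⟩

lemma step_below_add_step_above (hx : ∀ i, x i = 0 ∨ x i = 1) (k : ℕ) :
    ((if 0 < -walk x (k + 1) ∨ 0 < -walk x k then 1 else 0) +
      (if 0 < walk x (k + 1) ∨ 0 < walk x k then 1 else 0) : ℕ) = 1 := by
  obtain ⟨z, hz⟩ := exists_walk_eq_intCast hx k
  rw [walk_succ, hz]
  rcases hx (k + 1) with h | h <;> rw [h] <;> norm_num <;> norm_cast <;> split_ifs <;> omega

theorem timeAbove_one_sub_add_timeAbove (hx : ∀ i, x i = 0 ∨ x i = 1) (N : ℕ) :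
    timeAbove (fun i => 1 - x i) N + timeAbove x N = N := by
  rw [timeAbove, timeAbove, ← sum_add_distrib]
  calc _ = ∑ k ∈ Icc 1 N, 1 := sum_congr rfl fun k hk => ?_
    _ = N := by simp
  obtain ⟨j, rfl⟩ : ∃ j, k = j + 1 := Nat.exists_eq_add_of_le' (mem_Icc.1 hk).1
  simpa only [walk_one_sub, Nat.add_sub_cancel] using step_below_add_step_above hx j

end TimeAboveAxis

section FairCoin

variable {Ω α : Type*} [MeasurableSpace Ω] {μ : Measure Ω}

lemma measure_setOf_eq_inter_preimage (X : Ω → α) (c : α) (s : Set α) :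
    μ ({ω | X ω = c} ∩ X ⁻¹' s) = μ {ω | X ω = c} * s.indicator 1 c := by
  by_cases hc : c ∈ s
  · rw [Set.indicator_of_mem hc, Pi.one_apply, mul_one]
    exact congrArg μ (Set.inter_eq_left.2 fun ω (h : X ω = c) => by simpa [h])
  · rw [Set.indicator_of_notMem hc, mul_zero, ← measure_empty (μ := μ)]
    exact congrArg μ <|
      Set.eq_empty_of_forall_notMem fun ω ⟨(h : X ω = c), h'⟩ => hc (h ▸ h')

variable {X : Ω → ℝ}

lemma map_eq_smul_dirac_add_smul_dirac (hXm : Measurable X) (hX : ∀ ω, X ω = 0 ∨ X ω = 1) :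
    μ.map X = μ {ω | X ω = 0} • Measure.dirac 0 + μ {ω | X ω = 1} • Measure.dirac 1 := by
  ext s hs
  have hsplit : X ⁻¹' s = {ω | X ω = 0} ∩ X ⁻¹' s ∪ {ω | X ω = 1} ∩ X ⁻¹' s := by
    ext ω; rcases hX ω with h | h <;> simp [h]
  rw [Measure.map_apply hXm hs, hsplit, measure_union, measure_setOf_eq_inter_preimage,
    measure_setOf_eq_inter_preimage]
  · simp [Measure.dirac_apply' _ hs]
  · exact Set.disjoint_left.2 fun ω ⟨(h0 : X ω = 0), _⟩ ⟨(h1 : X ω = 1), _⟩ =>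
      zero_ne_one (h0.symm.trans h1)
  · exact (hXm (measurableSet_singleton 1)).inter (hXm hs)

theorem identDistrib_one_sub (hXm : Measurable X) (hX : ∀ ω, X ω = 0 ∨ X ω = 1)
    (h : μ {ω | X ω = 0} = μ {ω | X ω = 1}) :
    IdentDistrib X (fun ω => 1 - X ω) μ μ := by
  have hflip : Measurable fun t : ℝ => 1 - t := measurable_const.sub measurable_id
  refine ⟨hXm.aemeasurable, (hflip.comp hXm).aemeasurable, ?_⟩
  rw [show (fun ω => 1 - X ω) = (fun t => 1 - t) ∘ X from rfl, ← Measure.map_map hflip hXm,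
    map_eq_smul_dirac_add_smul_dirac hXm hX, Measure.map_add _ _ hflip, Measure.map_smul,
    Measure.map_smul, Measure.map_dirac' hflip, Measure.map_dirac' hflip, h]
  norm_num [add_comm]

end FairCoin

open TimeAboveAxis in
theorem time_above_axis_symmetric_general
    (Ω : Type*) [MeasurableSpace Ω] (μ : Measure Ω)
    (B : ℕ → Ω → ℝ) (hBmeas : ∀ i, Measurable (B i))
    (hBindep : iIndepFun B μ)
    (hB01 : ∀ i ω, B i ω = 0 ∨ B i ω = 1)
    (hB1 : ∀ i, μ {ω | B i ω = 1} = 1 / 2)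
    (hB0 : ∀ i, μ {ω | B i ω = 0} = 1 / 2)
    (S : ℕ → Ω → ℝ)
    (hS : ∀ k ω, S k ω = ∑ i ∈ Finset.range k, (2 * B (i + 1) ω - 1))
    (L : ℕ → Ω → ℕ)
    (hL : ∀ n ω, L n ω =
      ∑ k ∈ Finset.Icc 1 n, if 0 < S k ω ∨ 0 < S (k - 1) ω then 1 else 0)
    (n k : ℕ) (hk : k ≤ n) :
    μ {ω | L (2 * n) ω = 2 * k} = μ {ω | L (2 * n) ω = 2 * (n - k)} := by
  have hflip : IdentDistrib (fun ω i => B i ω) (fun ω i => 1 - B i ω) μ μ :=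
    IdentDistrib.pi
      (fun i => identDistrib_one_sub (hBmeas i) (hB01 i) ((hB0 i).trans (hB1 i).symm))
      hBindep (hBindep.comp _ fun _ => measurable_const.sub measurable_id)
  have hLω : ∀ ω, L (2 * n) ω = timeAbove (fun i => B i ω) (2 * n) := fun ω => by
    simp only [hL, hS, timeAbove, walk]
  calc μ {ω | L (2 * n) ω = 2 * k}
      = μ {ω | timeAbove (fun i => B i ω) (2 * n) ∈ ({2 * k} : Set ℕ)} := by
        simp only [hLω, Set.mem_singleton_iff]
    _ = μ {ω | timeAbove (fun i => 1 - B i ω) (2 * n) ∈ ({2 * k} : Set ℕ)} :=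
      (hflip.comp (measurable_timeAbove _)).measure_mem_eq (measurableSet_singleton _)
    _ = μ {ω | L (2 * n) ω = 2 * (n - k)} := by
      congr 1; ext ω
      have := timeAbove_one_sub_add_timeAbove (hB01 · ω) (2 * n)
      simp only [Set.mem_ofPred_eq, Set.mem_singleton_iff, hLω]
      omega

/-- The distribution of the time spent above the axis by the simple symmetric random walk of
length `2n` is symmetric: `P(L_{2n} = 2k) = P(L_{2n} = 2(n-k))` for `0 ≤ k ≤ n`. -/
theorem time_above_axis_symmetric
    (Ω : Type*) [MeasurableSpace Ω] (μ : Measure Ω) [IsProbabilityMeasure μ]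
    (B : ℕ → Ω → ℝ) (hBmeas : ∀ i, Measurable (B i))
    (hBindep : iIndepFun B μ)
    (hB01 : ∀ i ω, B i ω = 0 ∨ B i ω = 1)
    (hB1 : ∀ i, μ {ω | B i ω = 1} = 1 / 2)
    (hB0 : ∀ i, μ {ω | B i ω = 0} = 1 / 2)
    (S : ℕ → Ω → ℝ)
    (hS : ∀ k ω, S k ω = ∑ i ∈ Finset.range k, (2 * B (i + 1) ω - 1))
    (L : ℕ → Ω → ℕ)
    (hL : ∀ n ω, L n ω =
      ∑ k ∈ Finset.Icc 1 n, if 0 < S k ω ∨ 0 < S (k - 1) ω then 1 else 0)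
    (n k : ℕ) (hn : 1 ≤ n) (hk : k ≤ n) :
    μ {ω | L (2 * n) ω = 2 * k} = μ {ω | L (2 * n) ω = 2 * (n - k)} :=
  time_above_axis_symmetric_general Ω μ B hBmeas hBindep hB01 hB1 hB0 S hS L hL n k hk
end

section
/- (Lemma 1, total-variation concentration of the empirical measure.) Let Y_1, ..., Y_m be i.i.d. random variables taking values in a finite set A of cardinality s+1, with common distribution μ, and let ν_m be the empirical measure ν_m({a}) = |{j ≤ m : Y_j = a}|/m. Then for every real ε with ε ≥ √(20·(s+1)/m), P(Σ_{a ∈ A} |μ({a}) − ν_m({a})| > ε) ≤ 3·exp(−m·ε²/25). -/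
/-!
Both `μ` and the empirical measure `ν_m` are probability vectors, so
`∑ₐ |μ{a} - ν_m{a}| = 2 · max_B (ν_m(B) - μ(B))`, and the event forces `ν_m(B) - μ(B) > ε/2` for
one of the `2^(s+1)` subsets `B ⊆ A`. For fixed `B`, `m (ν_m(B) - μ(B))` is a sum of `m`
independent centred variables with values in an interval of length one, so Hoeffding's
inequality bounds that probability by `exp(-mε²/2)`. The union bound gives
`2^(s+1) exp(-mε²/2)`, which is at most `exp(-mε²/25)` as soon as `mε² ≥ 20(s+1)`.
-/

open MeasureTheory ProbabilityTheory

open Finset in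
theorem Finset.sum_abs_eq_two_mul_sum_filter_pos {ι : Type*} (s : Finset ι) (f : ι → ℝ)
    (hf : ∑ i ∈ s, f i = 0) : ∑ i ∈ s, |f i| = 2 * ∑ i ∈ s with 0 < f i, f i := by
  have habs : ∀ x : ℝ, |x| = 2 * (if 0 < x then x else 0) - x := fun x => by
    split_ifs with hx
    · rw [abs_of_pos hx]; ring
    · rw [abs_of_nonpos (not_lt.mp hx)]; ring
  simp only [habs, sum_sub_distrib, ← mul_sum, ← sum_filter, hf, sub_zero]

theorem exists_finset_lt_sum_sub_of_lt_sum_abs_sub {ι : Type*} [Fintype ι] {p q : ι → ℝ}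
    (hpq : ∑ i, p i = ∑ i, q i) {ε : ℝ} (hε : ε < ∑ i, |p i - q i|) :
    ∃ B : Finset ι, ε / 2 < ∑ i ∈ B, (q i - p i) := by
  refine ⟨Finset.univ.filter (fun i => 0 < q i - p i), ?_⟩
  rw [Finset.sum_congr rfl fun i _ => abs_sub_comm (p i) (q i),
    Finset.sum_abs_eq_two_mul_sum_filter_pos _ (fun i => q i - p i)
      (by rw [Finset.sum_sub_distrib, hpq, sub_self])] at hε
  linarith

theorem sum_card_filter_eq_sum_indicator {ι A : Type*} [Fintype ι] [DecidableEq A]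
    (g : ι → A) (B : Finset A) :
    ∑ a ∈ B, ((Finset.univ.filter (fun j => g j = a)).card : ℝ) =
      ∑ j, (B : Set A).indicator 1 (g j) := by
  simp only [Finset.card_filter, Nat.cast_sum, Nat.cast_ite, Nat.cast_one, Nat.cast_zero]
  rw [Finset.sum_comm]
  refine Finset.sum_congr rfl fun j _ => ?_
  simp [Finset.sum_ite_eq, Set.indicator_apply]

theorem sum_card_filter_eq_card {ι A : Type*} [Fintype ι] [Fintype A] [DecidableEq A]
    (g : ι → A) : ∑ a, ((Finset.univ.filter (fun j => g j = a)).card : ℝ) = Fintype.card ι := by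
  exact_mod_cast (Finset.card_eq_sum_card_fiberwise (fun j _ => Finset.mem_univ (g j))).symm

section Hoeffding

variable {Ω A ι : Type*} [MeasurableSpace Ω] [MeasurableSpace A] {P : Measure Ω}
  [IsProbabilityMeasure P] {μ : Measure A} {B : Set A}

theorem hasSubgaussianMGF_indicator_comp_sub {Z : Ω → A} (hZ : Measurable Z)
    (hdist : P.map Z = μ) (hB : MeasurableSet B) :
    HasSubgaussianMGF (fun ω => B.indicator (1 : A → ℝ) (Z ω) - μ.real B) (1 / 4) P := by
  have hmean : P[fun ω => B.indicator (1 : A → ℝ) (Z ω)] = μ.real B := by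
    rw [← integral_indicator_one hB, ← hdist]
    exact (integral_map hZ.aemeasurable
      (measurable_const.indicator hB).aestronglyMeasurable).symm
  have h := hasSubgaussianMGF_of_mem_Icc (μ := P)
    (X := fun ω => B.indicator (1 : A → ℝ) (Z ω)) (a := 0) (b := 1)
    ((measurable_const.indicator hB).comp hZ).aemeasurable
    (ae_of_all _ fun ω => by by_cases h : Z ω ∈ B <;> simp [h])
  rw [hmean] at h
  convert h using 1
  norm_num

theorem measureReal_sum_indicator_sub_ge_le {Y : ι → Ω → A} (hY : ∀ j, Measurable (Y j))
    (hindep : iIndepFun Y P) (hdist : ∀ j, P.map (Y j) = μ) (hB : MeasurableSet B)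
    (s : Finset ι) {t : ℝ} (ht : 0 ≤ t) :
    P.real {ω | t ≤ ∑ j ∈ s, (B.indicator 1 (Y j ω) - μ.real B)} ≤
      Real.exp (-2 * t ^ 2 / s.card) := by
  have h := HasSubgaussianMGF.measure_sum_ge_le_of_iIndepFun
    (hindep.comp (fun _ a => B.indicator (1 : A → ℝ) a - μ.real B)
      fun _ => (measurable_const.indicator hB).sub_const _)
    (s := s) (fun j _ => hasSubgaussianMGF_indicator_comp_sub (hY j) (hdist j) hB) ht
  convert h using 2
  · rfl
  · push_cast [Finset.sum_const, nsmul_eq_mul]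
    ring

end Hoeffding

theorem two_pow_mul_exp_neg_half_le {n : ℕ} {x : ℝ} (hx : 20 * n ≤ x) :
    2 ^ n * Real.exp (-x / 2) ≤ Real.exp (-x / 25) := by
  have h2 : (2 : ℝ) ^ n ≤ Real.exp (x / 20) :=
    calc (2 : ℝ) ^ n ≤ Real.exp 1 ^ n := by
          gcongr; linarith [Real.add_one_le_exp 1]
      _ = Real.exp n := Real.exp_one_pow n
      _ ≤ Real.exp (x / 20) := Real.exp_le_exp.mpr (by linarith)
  have hx0 : 0 ≤ x := le_trans (by positivity) hx
  calc 2 ^ n * Real.exp (-x / 2) ≤ Real.exp (x / 20) * Real.exp (-x / 2) := by gcongr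
    _ = Real.exp (x / 20 - x / 2) := by rw [← Real.exp_add]; ring_nf
    _ ≤ Real.exp (-x / 25) := Real.exp_le_exp.mpr (by linarith)

/-- Total-variation concentration of the empirical measure: for i.i.d. random variables
`Y₁,…,Y_m` with values in a finite set `A` of cardinality `s+1` and common distribution `μ`,
and for every `ε ≥ √(20(s+1)/m)`,
`P(Σ_{a ∈ A} |μ({a}) - ν_m({a})| > ε) ≤ 3·exp(-mε²/25)`, where
`ν_m({a}) = |{j : Y_j = a}|/m` is the empirical measure. -/
theorem empirical_tv_concentration
    (A : Type*) [Fintype A] [DecidableEq A] [MeasurableSpace A]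
    [MeasurableSingletonClass A]
    (s m : ℕ) (hcard : Fintype.card A = s + 1) (hm : 0 < m)
    (Ω : Type*) [MeasurableSpace Ω] (P : Measure Ω) [IsProbabilityMeasure P]
    (Y : Fin m → Ω → A) (hYmeas : ∀ j, Measurable (Y j))
    (hYindep : iIndepFun Y P)
    (μ : Measure A) [IsProbabilityMeasure μ]
    (hYdist : ∀ j, Measure.map (Y j) P = μ)
    (ε : ℝ) (hε : Real.sqrt (20 * (s + 1) / m) ≤ ε) :
    (P {ω | ε < ∑ a : A,
        |(μ {a}).toReal -
          ((Finset.univ.filter (fun j : Fin m => Y j ω = a)).card : ℝ) / m|}).toReal ≤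
      3 * Real.exp (-(m : ℝ) * ε ^ 2 / 25) := by
  have hm₀ : (0 : ℝ) < m := Nat.cast_pos.mpr hm
  obtain ⟨hε₀, hmε⟩ := Real.sqrt_le_iff.mp hε
  rw [div_le_iff₀ hm₀] at hmε
  set E : Finset A → Set Ω := fun B =>
    {ω | m * (ε / 2) ≤ ∑ j, ((B : Set A).indicator 1 (Y j ω) - μ.real B)}
  have hcover : {ω | ε < ∑ a, |(μ {a}).toReal -
      ((Finset.univ.filter (fun j : Fin m => Y j ω = a)).card : ℝ) / m|} ⊆
      ⋃ B ∈ (Finset.univ : Finset (Finset A)), E B := by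
    intro ω hω
    have hsum : ∑ a, μ.real {a} =
        ∑ a, ((Finset.univ.filter (fun j : Fin m => Y j ω = a)).card : ℝ) / m := by
      rw [← Finset.sum_div, sum_card_filter_eq_card, Fintype.card_fin, div_self hm₀.ne',
        sum_measureReal_singleton, Finset.coe_univ, probReal_univ]
    obtain ⟨B, hB⟩ := exists_finset_lt_sum_sub_of_lt_sum_abs_sub hsum hω
    have hcount : ∑ j, ((B : Set A).indicator 1 (Y j ω) - μ.real B) = m * ∑ a ∈ B,
        (((Finset.univ.filter (fun j : Fin m => Y j ω = a)).card : ℝ) / m - μ.real {a}) := by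
      rw [Finset.sum_sub_distrib, Finset.sum_sub_distrib, ← sum_card_filter_eq_sum_indicator,
        ← sum_measureReal_singleton, ← Finset.sum_div, Finset.sum_const, Finset.card_univ,
        Fintype.card_fin, nsmul_eq_mul]
      field_simp
    refine Set.mem_biUnion (Finset.mem_univ B) ?_
    simp only [E, Set.mem_ofPred_eq, hcount]
    gcongr
  have hE : ∀ B, P.real (E B) ≤ Real.exp (-(m : ℝ) * ε ^ 2 / 2) := fun B => by
    refine (measureReal_sum_indicator_sub_ge_le hYmeas hYindep hYdist B.measurableSet
      Finset.univ (by positivity)).trans_eq ?_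
    rw [Finset.card_univ, Fintype.card_fin]
    field_simp
  calc P.real _ ≤ ∑ B, P.real (E B) :=
        (measureReal_mono hcover (measure_ne_top _ _)).trans (measureReal_biUnion_finset_le _ _)
    _ ≤ 2 ^ (s + 1) * Real.exp (-(m : ℝ) * ε ^ 2 / 2) := by
        grw [Finset.sum_le_sum fun B _ => hE B, Finset.sum_const, Finset.card_univ,
          Fintype.card_finset, hcard, nsmul_eq_mul, Nat.cast_pow, Nat.cast_two]
    _ ≤ Real.exp (-(m : ℝ) * ε ^ 2 / 25) := by
        rw [neg_mul]
        exact two_pow_mul_exp_neg_half_le (by push_cast; linarith)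
    _ ≤ 3 * Real.exp (-(m : ℝ) * ε ^ 2 / 25) := by
        linarith [Real.exp_pos (-(m : ℝ) * ε ^ 2 / 25)]
end

section
/- (Cycle Lemma, existence and uniqueness of the good rotation.) Let n ≥ 1 and let x_1, ..., x_{2n+1} be a sequence with each x_i ∈ {−1, +1} and x_1 + ... + x_{2n+1} = −1. Then there exists exactly one r ∈ {0, 1, ..., 2n} such that the cyclically rotated sequence y_i = x_{((r+i−1) mod (2n+1)) + 1} satisfies y_1 + ... + y_j ≥ 0 for all 1 ≤ j ≤ 2n; for this r one also has y_1 + ... + y_{2n} = 0 and y_{2n+1} = −1, so the first 2n terms of y form a Dyck path. -/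
/-!
For `x` of length `N` and sum `-1`, let `S j = x₀ + ⋯ + x_{j-1}` be the partial sums of the
periodic extension of `x`, so that `S (j + N) = S j - 1`. Rotation by `r` is good exactly when `S r ≤ S (r + j)` for `j < N`.
The first index `r < N` at which `S` attains its minimum on `[0, N)` is good: beyond `N` one has
`S (k + N) = S k - 1 ≥ S r` because `S k > S r` for `k < r`. Two good rotations `a < b` would give
`S a ≤ S b ≤ S (a + N) = S a - 1`. Finally a good rotation has `y₁ + ⋯ + y_{N-1} ≥ 0` while
`y₁ + ⋯ + y_N = -1`, which forces `y_N = -1` and `y₁ + ⋯ + y_{N-1} = 0`.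
-/

open Finset

theorem exists_lt_forall_le_and_forall_lt_lt {α : Type*} [LinearOrder α] (f : ℕ → α) {N : ℕ}
    (hN : 0 < N) : ∃ r < N, (∀ k < N, f r ≤ f k) ∧ ∀ k < r, f r < f k := by
  obtain ⟨k, hk, hmin⟩ := (range N).exists_min_image f (nonempty_range_iff.2 hN.ne')
  have h : ∃ r, r < N ∧ ∀ k < N, f r ≤ f k :=
    ⟨k, mem_range.1 hk, fun j hj => hmin j (mem_range.2 hj)⟩
  obtain ⟨hrN, hrmin⟩ := Nat.find_spec h
  refine ⟨Nat.find h, hrN, hrmin, fun k hk => ?_⟩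
  have hkN : k < N := hk.trans hrN
  obtain ⟨j, hj, hjk⟩ : ∃ j < N, f j < f k := by simpa [hkN] using Nat.find_min h hk
  exact (hrmin j hj).trans_lt hjk

namespace CycleLemma

open Fin.NatCast

variable {m : ℕ} (x : Fin (m + 1) → ℤ)

/-- The index `i : ℕ` is read modulo `m + 1` through the cast to `Fin (m + 1)`. -/
def periodicSum (j : ℕ) : ℤ := ∑ i ∈ range j, x i

def IsGoodRotation (r : Fin (m + 1)) : Prop :=
  ∀ j ≤ m, 0 ≤ ∑ i ∈ range j, x (r + i)

theorem periodicSum_succ (j : ℕ) : periodicSum x (j + 1) = periodicSum x j + x j :=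
  sum_range_succ _ _

theorem periodicSum_add_period (j : ℕ) :
    periodicSum x (j + (m + 1)) = periodicSum x j + ∑ i, x i := by
  induction j with
  | zero =>
    simp [periodicSum, ← Fin.sum_univ_eq_sum_range (fun i => x i), Fin.cast_val_eq_self]
  | succ j ih =>
    have hcast : ((j + (m + 1) : ℕ) : Fin (m + 1)) = j := by simp
    rw [Nat.add_right_comm, periodicSum_succ, ih, hcast, periodicSum_succ]
    ring

theorem sum_range_rotate (r : Fin (m + 1)) (j : ℕ) :
    ∑ i ∈ range j, x (r + i) = periodicSum x (r + j) - periodicSum x r := by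
  induction j with
  | zero => simp
  | succ j ih =>
    have hcast : ((r + j : ℕ) : Fin (m + 1)) = r + j := by simp
    rw [sum_range_succ, ih, ← Nat.add_assoc, periodicSum_succ, hcast]
    ring

theorem sum_range_rotate_eq_sum (r : Fin (m + 1)) :
    ∑ i ∈ range (m + 1), x (r + i) = ∑ i, x i := by
  rw [sum_range_rotate, periodicSum_add_period]
  ring

theorem isGoodRotation_iff (r : Fin (m + 1)) :
    IsGoodRotation x r ↔ ∀ j ≤ m, periodicSum x r ≤ periodicSum x (r + j) := by
  simp only [IsGoodRotation, sum_range_rotate, sub_nonneg]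

theorem exists_isGoodRotation (hsum : -1 ≤ ∑ i, x i) : ∃ r, IsGoodRotation x r := by
  obtain ⟨r, hr, hmin, hfirst⟩ :=
    exists_lt_forall_le_and_forall_lt_lt (periodicSum x) m.succ_pos
  refine ⟨⟨r, hr⟩, (isGoodRotation_iff x _).2 fun j hj => ?_⟩
  rcases lt_or_ge (r + j) (m + 1) with h | h
  · exact hmin _ h
  · obtain ⟨k, hk⟩ : ∃ k, r + j = k + (m + 1) := ⟨r + j - (m + 1), by omega⟩
    have hkr := hfirst k (by omega)
    simp only [hk, periodicSum_add_period]
    omega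

variable {x}

theorem IsGoodRotation.le (hsum : ∑ i, x i < 0) {a b : Fin (m + 1)}
    (ha : IsGoodRotation x a) (hb : IsGoodRotation x b) : a ≤ b := by
  refine not_lt.1 fun hba => ?_
  rw [isGoodRotation_iff] at ha hb
  have hba' : (b : ℕ) < a := hba
  have h₁ := hb (a - b) (by omega)
  have h₂ := ha (b + (m + 1) - a) (by omega)
  rw [Nat.add_sub_cancel' hba'.le] at h₁
  rw [Nat.add_sub_cancel' (by omega), periodicSum_add_period] at h₂
  omega

theorem IsGoodRotation.eq (hsum : ∑ i, x i < 0) {a b : Fin (m + 1)}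
    (ha : IsGoodRotation x a) (hb : IsGoodRotation x b) : a = b :=
  le_antisymm (ha.le hsum hb) (hb.le hsum ha)

theorem IsGoodRotation.sum_eq_zero_and_last_eq_neg_one {r : Fin (m + 1)}
    (hr : IsGoodRotation x r) (hsum : ∑ i, x i = -1) (hx : ∀ i, -1 ≤ x i) :
    ∑ i ∈ range m, x (r + i) = 0 ∧ x (r + (m : Fin (m + 1))) = -1 := by
  have htotal := sum_range_rotate_eq_sum x r
  rw [sum_range_succ, hsum] at htotal
  have hfirst := hr m le_rfl
  have hlast := hx (r + m)
  constructor <;> omega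

end CycleLemma

open CycleLemma in
open Fin.NatCast in
theorem cycle_lemma_general (n : ℕ) (x : Fin (2 * n + 1) → ℤ)
    (hx : ∀ i, x i = 1 ∨ x i = -1) (hsum : ∑ i, x i = -1) :
    (∃! r : Fin (2 * n + 1), ∀ j ≤ 2 * n,
        0 ≤ ∑ i ∈ Finset.range j, x (r + (i : Fin (2 * n + 1)))) ∧
      ∀ r : Fin (2 * n + 1),
        (∀ j ≤ 2 * n, 0 ≤ ∑ i ∈ Finset.range j, x (r + (i : Fin (2 * n + 1)))) →
          (∑ i ∈ Finset.range (2 * n), x (r + (i : Fin (2 * n + 1)))) = 0 ∧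
            x (r + ((2 * n : ℕ) : Fin (2 * n + 1))) = -1 := by
  have hneg : ∑ i, x i < 0 := hsum ▸ neg_one_lt_zero
  have hx' : ∀ i, -1 ≤ x i := fun i => by rcases hx i with h | h <;> omega
  obtain ⟨r, hr⟩ := exists_isGoodRotation x hsum.ge
  exact ⟨⟨r, hr, fun s hs => IsGoodRotation.eq hneg hs hr⟩,
    fun s hs => IsGoodRotation.sum_eq_zero_and_last_eq_neg_one hs hsum hx'⟩

open Fin.NatCast in
/-- The Cycle Lemma (existence and uniqueness of the good rotation): if
`x₁,…,x_{2n+1} ∈ {-1,+1}` sum to `-1`, then there is exactly one cyclic rotation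
`y_i = x_{(r+i) mod (2n+1)}` whose first `2n` partial sums are all nonnegative; for this
rotation one moreover has `y₁ + ⋯ + y_{2n} = 0` and `y_{2n+1} = -1`, i.e. the first `2n`
terms form a Dyck path. -/
theorem cycle_lemma (n : ℕ) (hn : 1 ≤ n) (x : Fin (2 * n + 1) → ℤ)
    (hx : ∀ i, x i = 1 ∨ x i = -1) (hsum : ∑ i, x i = -1) :
    (∃! r : Fin (2 * n + 1), ∀ j ≤ 2 * n,
        0 ≤ ∑ i ∈ Finset.range j, x (r + (i : Fin (2 * n + 1)))) ∧
      ∀ r : Fin (2 * n + 1),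
        (∀ j ≤ 2 * n, 0 ≤ ∑ i ∈ Finset.range j, x (r + (i : Fin (2 * n + 1)))) →
          (∑ i ∈ Finset.range (2 * n), x (r + (i : Fin (2 * n + 1)))) = 0 ∧
            x (r + ((2 * n : ℕ) : Fin (2 * n + 1))) = -1 :=
  cycle_lemma_general n x hx hsum
end

section
/- (Cycle Lemma, fiber count.) Let n ≥ 1 and let w_1, ..., w_{2n} be a Dyck path of length 2n. Then there are exactly 2n+1 sequences x_1, ..., x_{2n+1} with each x_i ∈ {−1, +1} and sum −1 whose unique cyclic rotation with all partial sums of the first 2n terms nonnegative equals (w_1, ..., w_{2n}, −1); equivalently, the 2n+1 cyclic rotations of the sequence (w_1, ..., w_{2n}, −1) are pairwise distinct and are exactly these sequences. -/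
/-!
If a rotation by `t ≠ 0` fixed a sequence `z` of total sum `-1`, cutting that sum at position `t`
would write it as two proper prefix sums of `z` (the second one by periodicity), each nonnegative
when `z = (w, -1)` comes from a Dyck path `w`: impossible. So the `2n+1` rotations of `z` are
distinct. A sequence having `z` as a rotation is itself a rotation of `z`, and conversely every
rotation of `z` has `±1` entries, total sum `-1`, and the rotation back to `z` as witness.
-/

open Finset

namespace CycleLemma

variable {m : ℕ}

def prefixSum (x : Fin (m + 1) → ℤ) (j : ℕ) : ℤ := ∑ i ∈ range j, x (Fin.ofNat (m + 1) i)

theorem ofNat_add (a b : ℕ) :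
    Fin.ofNat (m + 1) (a + b) = Fin.ofNat (m + 1) a + Fin.ofNat (m + 1) b := by
  ext
  simp [Fin.val_add, Nat.add_mod]

theorem prefixSum_add (x : Fin (m + 1) → ℤ) (a b : ℕ) :
    prefixSum x (a + b) = prefixSum x a + prefixSum (fun i => x (Fin.ofNat (m + 1) a + i)) b := by
  simp only [prefixSum, sum_range_add, ofNat_add]

theorem prefixSum_full (x : Fin (m + 1) → ℤ) : prefixSum x (m + 1) = ∑ i, x i := by
  rw [prefixSum, ← Fin.sum_univ_eq_sum_range (fun i => x (Fin.ofNat (m + 1) i))]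
  simp only [Fin.ofNat_val_eq_self]

theorem eq_zero_of_rotate_eq {z : Fin (m + 1) → ℤ} (hsum : ∑ i, z i < 0)
    (hpre : ∀ j ≤ m, 0 ≤ prefixSum z j) {t : Fin (m + 1)} (ht : ∀ i, z (t + i) = z i) :
    t = 0 := by
  by_contra hne
  have ha : 0 < t.val := Fin.pos_iff_ne_zero.mpr hne
  have hsplit := prefixSum_add z t.val (m + 1 - t.val)
  rw [Nat.add_sub_cancel' t.isLt.le, prefixSum_full, Fin.ofNat_val_eq_self, funext ht] at hsplit
  have hhead := hpre t.val (Nat.lt_succ_iff.mp t.isLt)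
  have htail := hpre (m + 1 - t.val) (by omega)
  omega

theorem injective_rotations {z : Fin (m + 1) → ℤ} (hsum : ∑ i, z i < 0)
    (hpre : ∀ j ≤ m, 0 ≤ prefixSum z j) :
    Function.Injective fun r i => z (r + i) := by
  intro r s hrs
  have hper : ∀ i, z (s - r + i) = z i := fun i => by
    have := congrFun hrs (-r + i)
    simp only [add_neg_cancel_left] at this
    rw [this]
    congr 1
    abel
  exact (sub_eq_zero.mp (eq_zero_of_rotate_eq hsum hpre hper)).symm

theorem rotate_eq_iff {x z : Fin (m + 1) → ℤ} {r : Fin (m + 1)} :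
    (∀ i, x (r + i) = z i) ↔ x = fun i => z (-r + i) := by
  constructor
  · intro h
    funext i
    rw [← h, add_neg_cancel_left]
  · rintro rfl i
    simp only [neg_add_cancel_left]

theorem setOf_rotate_eq_eq_range {z : Fin (m + 1) → ℤ} (hpm : ∀ i, z i = 1 ∨ z i = -1)
    (hsum : ∑ i, z i = -1) (hpre : ∀ j ≤ m, 0 ≤ prefixSum z j) :
    {x : Fin (m + 1) → ℤ | (∀ i, x i = 1 ∨ x i = -1) ∧ (∑ i, x i = -1) ∧
      ∃ r, (∀ j ≤ m, 0 ≤ prefixSum (fun i => x (r + i)) j) ∧ ∀ i, x (r + i) = z i} =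
      Set.range fun r i => z (r + i) := by
  ext x
  constructor
  · rintro ⟨-, -, r, -, hx⟩
    exact ⟨-r, (rotate_eq_iff.mp hx).symm⟩
  · rintro ⟨r, rfl⟩
    refine ⟨fun i => hpm _, (Equiv.sum_comp (Equiv.addLeft r) z).trans hsum, -r, ?_,
      fun i => by simp only [add_neg_cancel_left]⟩
    simpa only [prefixSum, add_neg_cancel_left] using hpre

section DyckPath

variable {w : ℕ → ℤ} {z : Fin (m + 1) → ℤ}

theorem prefixSum_of_snoc (hz : ∀ i : Fin (m + 1), z i = if (i : ℕ) < m then w i else -1)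
    {j : ℕ} (hj : j ≤ m) : prefixSum z j = ∑ i ∈ range j, w i := by
  refine sum_congr rfl fun i hi => ?_
  have hi : i < m := (mem_range.mp hi).trans_le hj
  rw [hz, Fin.val_ofNat, Nat.mod_eq_of_lt (by omega), if_pos hi]

theorem sum_of_snoc (hz : ∀ i : Fin (m + 1), z i = if (i : ℕ) < m then w i else -1) :
    ∑ i, z i = ∑ i ∈ range m, w i - 1 := by
  rw [← prefixSum_full, prefixSum, sum_range_succ, ← prefixSum, prefixSum_of_snoc hz le_rfl, hz]
  simp [sub_eq_add_neg]

end DyckPath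

end CycleLemma

open CycleLemma in
theorem cycle_lemma_fiber_count_general (n : ℕ) (w : ℕ → ℤ)
    (hw1 : ∀ i < 2 * n, w i = 1 ∨ w i = -1)
    (hw2 : ∀ j ≤ 2 * n, 0 ≤ ∑ i ∈ Finset.range j, w i)
    (hw3 : ∑ i ∈ Finset.range (2 * n), w i = 0)
    (z : Fin (2 * n + 1) → ℤ)
    (hz : ∀ i : Fin (2 * n + 1), z i = if (i : ℕ) < 2 * n then w i else -1) :
    ({x : Fin (2 * n + 1) → ℤ |
        (∀ i, x i = 1 ∨ x i = -1) ∧ (∑ i, x i = -1) ∧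
          ∃ r : Fin (2 * n + 1),
            (∀ j ≤ 2 * n, 0 ≤ ∑ i ∈ Finset.range j, x (r + (Fin.ofNat (2 * n + 1) i : Fin (2 * n + 1)))) ∧
              ∀ i, x (r + i) = z i}).ncard = 2 * n + 1 ∧
      Function.Injective (fun r : Fin (2 * n + 1) => fun i : Fin (2 * n + 1) => z (r + i)) ∧
      {x : Fin (2 * n + 1) → ℤ |
        (∀ i, x i = 1 ∨ x i = -1) ∧ (∑ i, x i = -1) ∧
          ∃ r : Fin (2 * n + 1),
            (∀ j ≤ 2 * n, 0 ≤ ∑ i ∈ Finset.range j, x (r + (Fin.ofNat (2 * n + 1) i : Fin (2 * n + 1)))) ∧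
              ∀ i, x (r + i) = z i} =
        Set.range (fun r : Fin (2 * n + 1) => fun i : Fin (2 * n + 1) => z (r + i)) := by
  have hpm : ∀ i, z i = 1 ∨ z i = -1 := fun i => by
    rw [hz]
    split_ifs with hi
    exacts [hw1 i hi, Or.inr rfl]
  have hsum : ∑ i, z i = -1 := by rw [sum_of_snoc hz, hw3]; rfl
  have hpre : ∀ j ≤ 2 * n, 0 ≤ prefixSum z j := fun j hj =>
    (prefixSum_of_snoc hz hj).symm ▸ hw2 j hj
  have hinj := injective_rotations (hsum.trans_lt neg_one_lt_zero) hpre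
  have hset := setOf_rotate_eq_eq_range hpm hsum hpre
  refine ⟨(congrArg Set.ncard hset).trans ?_, hinj, hset⟩
  rw [Set.ncard_range_of_injective hinj, Nat.card_fin]

/-- The Cycle Lemma, fiber count: if `w₁,…,w_{2n}` is a Dyck path of length `2n` and
`z = (w₁,…,w_{2n},-1)`, then there are exactly `2n+1` sequences `x` of `2n+1` entries from
`{-1,+1}` summing to `-1` whose (unique) cyclic rotation with all partial sums of the first
`2n` terms nonnegative equals `z`; equivalently, the `2n+1` cyclic rotations of `z` are
pairwise distinct and are exactly these sequences. -/
theorem cycle_lemma_fiber_count (n : ℕ) (hn : 1 ≤ n) (w : ℕ → ℤ)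
    (hw1 : ∀ i < 2 * n, w i = 1 ∨ w i = -1)
    (hw2 : ∀ j ≤ 2 * n, 0 ≤ ∑ i ∈ Finset.range j, w i)
    (hw3 : ∑ i ∈ Finset.range (2 * n), w i = 0)
    (z : Fin (2 * n + 1) → ℤ)
    (hz : ∀ i : Fin (2 * n + 1), z i = if (i : ℕ) < 2 * n then w i else -1) :
    ({x : Fin (2 * n + 1) → ℤ |
        (∀ i, x i = 1 ∨ x i = -1) ∧ (∑ i, x i = -1) ∧
          ∃ r : Fin (2 * n + 1),
            (∀ j ≤ 2 * n, 0 ≤ ∑ i ∈ Finset.range j, x (r + (Fin.ofNat (2 * n + 1) i : Fin (2 * n + 1)))) ∧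
              ∀ i, x (r + i) = z i}).ncard = 2 * n + 1 ∧
      Function.Injective (fun r : Fin (2 * n + 1) => fun i : Fin (2 * n + 1) => z (r + i)) ∧
      {x : Fin (2 * n + 1) → ℤ |
        (∀ i, x i = 1 ∨ x i = -1) ∧ (∑ i, x i = -1) ∧
          ∃ r : Fin (2 * n + 1),
            (∀ j ≤ 2 * n, 0 ≤ ∑ i ∈ Finset.range j, x (r + (Fin.ofNat (2 * n + 1) i : Fin (2 * n + 1)))) ∧
              ∀ i, x (r + i) = z i} =
        Set.range (fun r : Fin (2 * n + 1) => fun i : Fin (2 * n + 1) => z (r + i)) :=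
  cycle_lemma_fiber_count_general n w hw1 hw2 hw3 z hz
end
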